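/- arXiv:1612.03607 — 2 statements merged into one kernel-verified Lean document; each statement's English description precedes it below -/
import Mathlib

section
/- Let H be a digraph and r ∈ V(H) such that every vertex of H is reachable from r. Let B_r be the diblock of r in H. Then for every v ∈ V(H) \ B_r there is a unique vertex x ∈ B_r \ {r} such that every directed path from r to v intersects B_r for the last time in x. -/
namespace CutPaper

variable {V : Type*}

/-- A directed path in the digraph `A`, given as a nonempty list of distinct
vertices from `u` to `v` with consecutive vertices joined by arcs. -/
def IsPath (A : V → V → Prop) (p : List V) (u v : V) : Prop :=
  p.Chain' A ∧ p.head? = some u ∧ p.getLast? = some v ∧ p.Nodup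

/-- `v` is reachable from `u` in the digraph `A`. -/
def Reaches (A : V → V → Prop) (u v : V) : Prop := ∃ p, IsPath A p u v

/-- Two paths from `r` to `v` are internally disjoint: they share only `r` and `v`. -/
def IntDisj (p q : List V) (r v : V) : Prop :=
  ∀ x, x ∈ p → x ∈ q → x = r ∨ x = v

/-- `v` is bi-reachable from `r`: there are two (distinct) internally
vertex-disjoint paths from `r` to `v`. -/
def BiReachable (A : V → V → Prop) (r v : V) : Prop :=
  ∃ p q, p ≠ q ∧ IsPath A p r v ∧ IsPath A q r v ∧ IntDisj p q r v

/-- The diblock of `r`: bi-reachable vertices together with `r` and its out-neighbours. -/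
def diblock (A : V → V → Prop) (r : V) : Set V :=
  {v | BiReachable A r v} ∪ {r} ∪ {v | A r v}

/-- The subdigraph of `A` induced on a vertex set `S`. -/
def Asub (A : V → V → Prop) (S : Set V) : V → V → Prop :=
  fun u v => A u v ∧ u ∈ S ∧ v ∈ S

/-- The path `p` meets the set `B` for the last time in `x`. -/
def LastTouch (B : Set V) (p : List V) (x : V) : Prop :=
  ∃ p₁ p₂, p = p₁ ++ x :: p₂ ∧ x ∈ B ∧ ∀ y ∈ p₂, y ∉ B

/-- `T` is an out-tree with vertex set `S` and root `r`, as a subdigraph of `A`. -/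
structure IsOutTree (A T : V → V → Prop) (S : Set V) (r : V) : Prop where
  sub : ∀ u v, T u v → A u v
  mem : ∀ u v, T u v → u ∈ S ∧ v ∈ S
  root_mem : r ∈ S
  no_in_root : ∀ u, ¬ T u r
  unique_in : ∀ v ∈ S, v ≠ r → ∃! u, T u v
  reach : ∀ v ∈ S, Reaches T r v

/-- `T` is an in-tree with vertex set `S` and root `r`, as a subdigraph of `A`. -/
def IsInTree (A T : V → V → Prop) (S : Set V) (r : V) : Prop :=
  IsOutTree (fun u v => A v u) (fun u v => T v u) S r

/-- The leaves (vertices of out-degree zero) of an out-tree `T` on vertex set `S`. -/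
def leaves (T : V → V → Prop) (S : Set V) : Set V :=
  {v | v ∈ S ∧ ∀ u, ¬ T v u}

/-- The leaves (vertices of in-degree zero) of an in-tree `T` on vertex set `S`. -/
def inLeaves (T : V → V → Prop) (S : Set V) : Set V :=
  {v | v ∈ S ∧ ∀ u, ¬ T u v}

/-- The raw data of a rooted cut decomposition: a node set, a parent map,
and an assignment of diblocks to nodes. -/
structure PreDecomp (V : Type*) where
  N : Set V
  parent : V → V
  B : V → Set V

/-- One step up the decomposition tree rooted at `r`. -/
def Step (d : PreDecomp V) (r : V) (a b : V) : Prop :=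
  a ∈ d.N ∧ a ≠ r ∧ d.parent a = b

/-- `x` is an ancestor (not necessarily proper) of `y` in the decomposition tree. -/
def Anc (d : PreDecomp V) (r : V) (x y : V) : Prop :=
  Relation.ReflTransGen (Step d r) y x

/-- `y` is a child of `x` in the decomposition tree. -/
def IsChild (d : PreDecomp V) (r : V) (y x : V) : Prop :=
  y ∈ d.N ∧ y ≠ r ∧ d.parent y = x

/-- `B*_x`: the union of the diblocks over the subtree rooted at `x`. -/
def Bstar (d : PreDecomp V) (r : V) (x : V) : Set V :=
  {v | ∃ y ∈ d.N, Anc d r x y ∧ v ∈ d.B y}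

/-- The partition class `X_y` of a bottleneck `y` of the diblock of `x`
inside `B*_x`: the vertices below `B x` whose access paths from `x`
leave `B x` for the last time at `y`. -/
def PartClass (A : V → V → Prop) (d : PreDecomp V) (r x y : V) : Set V :=
  {v | v ∈ Bstar d r x ∧ v ∉ d.B x ∧
    ∀ p, IsPath (Asub A (Bstar d r x)) p x v → LastTouch (d.B x) p y}

/-- `d` is the `r`-rooted cut decomposition of the digraph `A`:
the tree is well-founded towards the root `r`, the diblocks cover all vertices,
each `B x` is the diblock of `x` in the subdigraph induced on `B*_x`,
the children of `x` are exactly the bottlenecks of `B x`, and the subtree of a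
child `y` spans exactly `{y}` together with the partition class of `y`. -/
structure IsCutDecomp (A : V → V → Prop) (r : V) (d : PreDecomp V) : Prop where
  root_mem : r ∈ d.N
  parent_mem : ∀ x ∈ d.N, x ≠ r → d.parent x ∈ d.N
  tree : ∀ x ∈ d.N, Anc d r r x
  cover : Bstar d r r = Set.univ
  diblock_eq : ∀ x ∈ d.N, d.B x = diblock (Asub A (Bstar d r x)) x
  child_iff : ∀ x ∈ d.N, ∀ y,
    IsChild d r y x ↔ (y ∈ d.B x ∧ y ≠ x ∧ (PartClass A d r x y).Nonempty)
  child_part : ∀ x ∈ d.N, ∀ y, IsChild d r y x →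
    Bstar d r y = insert y (PartClass A d r x y)

/-!
Suppose two `r`–`v` paths leave the diblock `B` for the last time at `x ≠ y`, along final
segments `x → v` and `y → v` that meet `B` only in `x` and `y`. Rerouting one of two internally
disjoint `r`–`y` paths along an `r`–`x` path that avoids `y` gives paths `r → x` and `r → y`
meeting only in `r`. Let `c ≠ d` be the first vertices of these paths on the final segments, and
follow the segments from `c` and `d` until they first meet, in `w`. The two glued `r`–`w` paths
are internally disjoint, so `w ∈ B`; but the only vertices of `B` on the segments from `c` and
from `d` are `c` and `d` themselves.
The last vertex of an `r`–`v` path in `B` is not `r`, as the successor of `r` lies in `B`.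
-/

open List

theorem exists_split_first (P : V → Prop) {l : List V} (h : ∃ a ∈ l, P a) :
    ∃ l₁ a l₂, l = l₁ ++ a :: l₂ ∧ P a ∧ ∀ b ∈ l₁, ¬ P b := by
  classical
  obtain ⟨a, ha⟩ := Option.isSome_iff_exists.1 (find?_isSome (p := fun b => decide (P b)).2
    (by simpa using h))
  obtain ⟨hPa, l₁, l₂, rfl, hl₁⟩ := find?_eq_some_iff_append.1 ha
  exact ⟨l₁, a, l₂, rfl, by simpa using hPa, by simpa using hl₁⟩

section LastTouch

variable {B : Set V} {p : List V} {x y : V}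

theorem lastTouch_iff_find?_reverse [DecidablePred (· ∈ B)] :
    LastTouch B p x ↔ p.reverse.find? (· ∈ B) = some x := by
  rw [find?_eq_some_iff_append]
  constructor
  · rintro ⟨p₁, p₂, rfl, hx, hp₂⟩
    exact ⟨by simpa using hx, p₂.reverse, p₁.reverse, by simp, by simpa using hp₂⟩
  · rintro ⟨hx, l₁, l₂, h, hl₁⟩
    refine ⟨l₂.reverse, l₁.reverse, ?_, by simpa using hx, by simpa using hl₁⟩
    rw [← reverse_reverse p, h]
    simp

theorem exists_lastTouch (h : ∃ a ∈ p, a ∈ B) : ∃ x, LastTouch B p x := by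
  classical
  obtain ⟨x, hx⟩ := Option.isSome_iff_exists.1
    (find?_isSome (xs := p.reverse) (p := fun a => decide (a ∈ B)).2 (by simpa using h))
  exact ⟨x, lastTouch_iff_find?_reverse.2 hx⟩

theorem LastTouch.mem (h : LastTouch B p x) : x ∈ B := by
  obtain ⟨_, _, _, hx, _⟩ := h
  exact hx

theorem LastTouch.unique (hx : LastTouch B p x) (hy : LastTouch B p y) : x = y := by
  classical
  exact Option.some_injective _
    ((lastTouch_iff_find?_reverse.1 hx).symm.trans (lastTouch_iff_find?_reverse.1 hy))

end LastTouch

section Path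

variable {A : V → V → Prop} {p q p₁ p₂ : List V} {u v w z : V}

theorem IsPath.nodup (h : IsPath A p u v) : p.Nodup := h.2.2.2

theorem IsPath.exists_eq_cons (h : IsPath A p u v) : ∃ t, p = u :: t := by
  obtain ⟨-, hu, -⟩ := h
  cases p with
  | nil => simp at hu
  | cons a t => exact ⟨t, by simpa using hu⟩

theorem IsPath.start_mem (h : IsPath A p u v) : u ∈ p := by
  obtain ⟨t, rfl⟩ := h.exists_eq_cons
  exact mem_cons_self

theorem IsPath.end_mem (h : IsPath A p u v) : v ∈ p := mem_of_getLast? h.2.2.1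

theorem isPath_pair (h : A u v) (huv : u ≠ v) : IsPath A [u, v] u v :=
  ⟨isChain_pair.2 h, rfl, rfl, by simpa using huv⟩

theorem IsPath.takeUntil (h : IsPath A (p₁ ++ z :: p₂) u v) : IsPath A (p₁ ++ [z]) u z := by
  obtain ⟨hc, hu, -, hn⟩ := h
  rw [← singleton_append, ← append_assoc] at hc hn
  refine ⟨(isChain_append.1 hc).1, ?_, by simp, (nodup_append.1 hn).1⟩
  cases p₁ <;> simpa using hu

theorem IsPath.dropUntil (h : IsPath A (p₁ ++ z :: p₂) u v) : IsPath A (z :: p₂) z v := by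
  obtain ⟨hc, -, hv, hn⟩ := h
  exact ⟨(isChain_append.1 hc).2.1, rfl, by simpa [getLast?_append] using hv,
    (nodup_append.1 hn).2.1⟩

theorem IsPath.end_notMem_takeUntil (h : IsPath A (p₁ ++ z :: p₂) u v) : v ∉ p₁ :=
  fun hv => (nodup_append.1 h.nodup).2.2 v hv v h.dropUntil.end_mem rfl

theorem IsPath.append (hp : IsPath A (p ++ [z]) u z) (hq : IsPath A q z w)
    (hpq : ∀ a ∈ p, a ∉ q) : IsPath A (p ++ q) u w := by
  obtain ⟨q, rfl⟩ := hq.exists_eq_cons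
  obtain ⟨hpc, hpu, -, hpn⟩ := hp
  obtain ⟨hqc, -, hqw, hqn⟩ := hq
  refine ⟨?_, ?_, ?_, nodup_append.2 ⟨(nodup_append.1 hpn).1, hqn, ?_⟩⟩
  · exact (by simpa using hpc.append_overlap (l₃ := q) hqc (cons_ne_nil z []) :
      IsChain A (p ++ z :: q))
  · cases p <;> simpa using hpu
  · simpa [getLast?_append] using hqw
  · rintro a ha _ hb rfl
    exact hpq a ha hb

theorem IsPath.exists_tail_subset_of_mem (h : IsPath A (u :: p) u v) (hz : z ∈ u :: p) :
    ∃ q, IsPath A (z :: q) z v ∧ q ⊆ p := by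
  obtain ⟨l₁, l₂, hsplit⟩ := append_of_mem hz
  refine ⟨l₂, (hsplit ▸ h).dropUntil, ?_⟩
  cases l₁ with
  | nil => simp_all
  | cons a l₁ =>
    simp only [cons_append, cons.injEq] at hsplit
    rw [hsplit.2]
    exact subset_append_of_subset_right _ (subset_cons_self _ _)

end Path

section Diblock

variable {A : V → V → Prop} {r v w x y : V}

theorem mem_diblock_self : r ∈ diblock A r := Or.inl (Or.inr rfl)

theorem mem_diblock_of_adj (h : A r w) : w ∈ diblock A r := Or.inr h

theorem exists_intDisj_of_mem_diblock (hx : x ∈ diblock A r) (hxr : x ≠ r) :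
    ∃ p q, IsPath A p r x ∧ IsPath A q r x ∧ IntDisj p q r x := by
  rcases hx with (⟨p, q, -, hp, hq, hpq⟩ | rfl) | hrx
  · exact ⟨p, q, hp, hq, hpq⟩
  · exact absurd rfl hxr
  · exact ⟨[r, x], [r, x], isPath_pair hrx hxr.symm, isPath_pair hrx hxr.symm,
      fun a ha _ => by simpa using ha⟩

theorem mem_diblock_of_intDisj {p q : List V} (hp : IsPath A p r w) (hq : IsPath A q r w)
    (hpq : IntDisj p q r w) (hrw : r ≠ w) : w ∈ diblock A r := by
  by_cases h : p = q
  · subst h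
    -- `IntDisj p p` forces every vertex of `p` to be `r` or `w`, so `p` starts with the arc `r w`
    obtain ⟨t, rfl⟩ := hp.exists_eq_cons
    cases t with
    | nil => exact absurd (by simpa using hp.2.2.1) hrw
    | cons b t =>
      have hbr : b ≠ r := fun hbr => by simpa [hbr] using hp.nodup
      have hbw : b = w := (hpq b (by simp) (by simp)).resolve_left hbr
      exact mem_diblock_of_adj (hbw ▸ (isChain_cons_cons.1 hp.1).1)
  · exact Or.inl (Or.inl ⟨p, q, h, hp, hq, hpq⟩)

theorem mem_diblock_of_glue {f g R R' : List V} {c d : V}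
    (hf : IsPath A (f ++ [c]) r c) (hg : IsPath A (g ++ [d]) r d)
    (hR : IsPath A R c w) (hR' : IsPath A R' d w)
    (hfg : ∀ a ∈ f, a ∈ g → a = r) (hRR' : ∀ a ∈ R, a ∈ R' → a = w)
    (hfR : ∀ a ∈ f, a ∉ R ∧ a ∉ R') (hgR : ∀ a ∈ g, a ∉ R ∧ a ∉ R')
    (hrw : r ≠ w) : w ∈ diblock A r := by
  refine mem_diblock_of_intDisj (hf.append hR fun a ha => (hfR a ha).1)
    (hg.append hR' fun a ha => (hgR a ha).2) ?_ hrw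
  intro a ha hb
  rcases mem_append.1 ha with ha | ha <;> rcases mem_append.1 hb with hb | hb
  · exact Or.inl (hfg a ha hb)
  · exact absurd hb (hfR a ha).2
  · exact absurd ha (hgR a hb).1
  · exact Or.inr (hRR' a ha hb)

theorem exists_fan (hx : x ∈ diblock A r) (hxr : x ≠ r) (hy : y ∈ diblock A r) (hyr : y ≠ r)
    (hxy : x ≠ y) :
    ∃ F G, IsPath A F r x ∧ IsPath A G r y ∧ ∀ a ∈ F, a ∈ G → a = r := by
  obtain ⟨F₁, F₂, hF₁, hF₂, hF⟩ := exists_intDisj_of_mem_diblock hx hxr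
  obtain ⟨G₁, G₂, hG₁, hG₂, hG⟩ := exists_intDisj_of_mem_diblock hy hyr
  obtain ⟨F, hF, hyF⟩ : ∃ F, IsPath A F r x ∧ y ∉ F := by
    by_cases hy₁ : y ∈ F₁
    · exact ⟨F₂, hF₂, fun hy₂ => (hF y hy₁ hy₂).elim hyr (hxy ·.symm)⟩
    · exact ⟨F₁, hF₁, hy₁⟩
  -- reroute `G₁` along `F` after the last vertex `z` that `F` shares with `G₁ ∪ G₂`
  obtain ⟨z, f₁, f₂, rfl, hz, hf₂⟩ :=
    exists_lastTouch (B := {a | a ∈ G₁ ∨ a ∈ G₂}) ⟨r, hF.start_mem, Or.inl hG₁.start_mem⟩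
  wlog hz₁ : z ∈ G₁ generalizing G₁ G₂
  · exact this G₂ G₁ hG₂ hG₁ (fun a h₂ h₁ => hG a h₁ h₂) (Or.symm hz)
      (fun a ha h => hf₂ a ha h.symm) (hz.resolve_left hz₁)
  obtain ⟨g₁, g₂, rfl⟩ := append_of_mem hz₁
  have hzg₁ : z ∉ g₁ := fun h => (nodup_append.1 hG₁.nodup).2.2 z h z mem_cons_self rfl
  have hzy : z ≠ y := fun h => hyF (h ▸ mem_append_right _ mem_cons_self)
  refine ⟨g₁ ++ z :: f₂, G₂, hG₁.takeUntil.append hF.dropUntil ?_, hG₂, ?_⟩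
  · intro a ha hb
    rcases mem_cons.1 hb with rfl | ha₂
    · exact hzg₁ ha
    · exact hf₂ a ha₂ (Or.inl (mem_append_left _ ha))
  · intro a ha ha₂
    rcases mem_append.1 ha with ha | ha
    · exact (hG a (mem_append_left _ ha) ha₂).resolve_right
        (fun h => hG₁.end_notMem_takeUntil (h ▸ ha))
    rcases mem_cons.1 ha with rfl | ha
    · exact (hG a (mem_append_right _ mem_cons_self) ha₂).resolve_right hzy
    · exact absurd (Or.inr ha₂) (hf₂ a ha)

theorem not_lastTouch_diblock_self {p : List V} (hp : IsPath A p r v) (hv : v ∉ diblock A r) :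
    ¬ LastTouch (diblock A r) p r := by
  rintro ⟨p₁, p₂, rfl, -, hp₂⟩
  have hseg := hp.dropUntil
  cases p₂ with
  | nil =>
    have hrv : r = v := by simpa using hseg.2.2.1
    exact hv (hrv ▸ mem_diblock_self)
  | cons b t => exact hp₂ b mem_cons_self (mem_diblock_of_adj (isChain_cons_cons.1 hseg.1).1)

theorem exists_mem_diblock_of_merge {f g P Q : List V} {c d : V}
    (hf : IsPath A (f ++ [c]) r c) (hg : IsPath A (g ++ [d]) r d)
    (hP : IsPath A (c :: P) c v) (hQ : IsPath A (d :: Q) d v)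
    (hfg : ∀ a ∈ f, a ∈ g → a = r) (hfPQ : ∀ a ∈ f, a ∉ c :: P ∧ a ∉ d :: Q)
    (hgPQ : ∀ a ∈ g, a ∉ c :: P ∧ a ∉ d :: Q) (hrP : r ∉ c :: P) :
    ∃ w ∈ c :: P, w ∈ d :: Q ∧ w ∈ diblock A r := by
  obtain ⟨P₁, w, P₂, hPw, hwQ, hP₁⟩ :=
    exists_split_first (· ∈ d :: Q) ⟨v, hP.end_mem, hQ.end_mem⟩
  obtain ⟨Q₁, Q₂, hQw⟩ := append_of_mem hwQ
  have hRP : P₁ ++ [w] ⊆ c :: P :=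
    hPw ▸ ((singleton_sublist.2 mem_cons_self).append_left P₁).subset
  have hR'Q : Q₁ ++ [w] ⊆ d :: Q :=
    hQw ▸ ((singleton_sublist.2 mem_cons_self).append_left Q₁).subset
  refine ⟨w, hRP (by simp), hwQ, mem_diblock_of_glue hf hg (hPw ▸ hP).takeUntil
    (hQw ▸ hQ).takeUntil hfg ?_ (fun a ha => (hfPQ a ha).imp (mt (hRP ·)) (mt (hR'Q ·)))
    (fun a ha => (hgPQ a ha).imp (mt (hRP ·)) (mt (hR'Q ·))) fun h => hrP (hRP (by simp [h]))⟩
  intro a ha hb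
  rcases mem_append.1 ha with ha | ha
  · exact absurd (hR'Q hb) (hP₁ a ha)
  · simpa using ha

theorem false_of_two_exits {S T : List V} (hx : x ∈ diblock A r) (hxr : x ≠ r)
    (hy : y ∈ diblock A r) (hyr : y ≠ r) (hxy : x ≠ y)
    (hS : IsPath A (x :: S) x v) (hT : IsPath A (y :: T) y v)
    (hSB : ∀ a ∈ S, a ∉ diblock A r) (hTB : ∀ a ∈ T, a ∉ diblock A r) : False := by
  set L := (x :: S) ++ (y :: T) with hL
  have hrL : r ∉ L := by
    simp only [hL, mem_append, mem_cons, not_or]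
    exact ⟨⟨hxr.symm, fun h => hSB r h mem_diblock_self⟩,
      ⟨hyr.symm, fun h => hTB r h mem_diblock_self⟩⟩
  have exit : ∀ c ∈ L,
      ∃ P, IsPath A (c :: P) c v ∧ c :: P ⊆ L ∧ ∀ a ∈ P, a ∉ diblock A r := by
    intro c hc
    rcases mem_append.1 hc with hcS | hcT
    · obtain ⟨P, hP, hPS⟩ := hS.exists_tail_subset_of_mem hcS
      exact ⟨P, hP, cons_subset.2 ⟨hc, fun a ha => mem_append_left _ (mem_cons_of_mem x (hPS ha))⟩,
        fun a ha => hSB a (hPS ha)⟩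
    · obtain ⟨P, hP, hPT⟩ := hT.exists_tail_subset_of_mem hcT
      exact ⟨P, hP, cons_subset.2 ⟨hc, fun a ha => mem_append_right _ (mem_cons_of_mem y (hPT ha))⟩,
        fun a ha => hTB a (hPT ha)⟩
  obtain ⟨F, G, hF, hG, hFG⟩ := exists_fan hx hxr hy hyr hxy
  obtain ⟨f, c, f', rfl, hcL, hf⟩ :=
    exists_split_first (· ∈ L) ⟨x, hF.end_mem, by simp [hL]⟩
  obtain ⟨g, d, g', rfl, hdL, hg⟩ :=
    exists_split_first (· ∈ L) ⟨y, hG.end_mem, by simp [hL]⟩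
  have hcd : c ≠ d := fun h => hrL (hFG c (by simp) (by simp [h]) ▸ hcL)
  obtain ⟨P, hP, hPL, hPB⟩ := exit c hcL
  obtain ⟨Q, hQ, hQL, hQB⟩ := exit d hdL
  obtain ⟨w, hwP, hwQ, hwB⟩ := exists_mem_diblock_of_merge hF.takeUntil hG.takeUntil hP hQ
    (fun a ha hb => hFG a (mem_append_left _ ha) (mem_append_left _ hb))
    (fun a ha => ⟨fun h => hf a ha (hPL h), fun h => hf a ha (hQL h)⟩)
    (fun a ha => ⟨fun h => hg a ha (hPL h), fun h => hg a ha (hQL h)⟩) (fun h => hrL (hPL h))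
  have hwc : w = c := (mem_cons.1 hwP).resolve_right fun h => hPB w h hwB
  have hwd : w = d := (mem_cons.1 hwQ).resolve_right fun h => hQB w h hwB
  exact hcd (hwc.symm.trans hwd)

theorem eq_of_lastTouch_diblock {p q : List V} (hv : v ∉ diblock A r)
    (hp : IsPath A p r v) (hq : IsPath A q r v)
    (hx : LastTouch (diblock A r) p x) (hy : LastTouch (diblock A r) q y) : x = y := by
  by_contra hxy
  have hxr : x ≠ r := by rintro rfl; exact not_lastTouch_diblock_self hp hv hx
  have hyr : y ≠ r := by rintro rfl; exact not_lastTouch_diblock_self hq hv hy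
  obtain ⟨p₁, S, rfl, hxB, hSB⟩ := hx
  obtain ⟨q₁, T, rfl, hyB, hTB⟩ := hy
  exact false_of_two_exits hxB hxr hyB hyr hxy hp.dropUntil hq.dropUntil hSB hTB

end Diblock

/-- vertices outside the diblock of `r` partition according to a
unique cut vertex of the diblock: every path from `r` to `v` meets the diblock
for the last time in the same vertex `x ≠ r`. -/
theorem diblock_partition {V : Type*}
    (A : V → V → Prop) (r : V) (hreach : ∀ v, Reaches A r v)
    (v : V) (hv : v ∉ diblock A r) :
    ∃! x, x ∈ diblock A r \ {r} ∧
      ∀ p, IsPath A p r v → LastTouch (diblock A r) p x := by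
  obtain ⟨P, hP⟩ := hreach v
  obtain ⟨x, hx⟩ := exists_lastTouch ⟨r, hP.start_mem, mem_diblock_self⟩
  refine ⟨x, ⟨⟨hx.mem, ?_⟩, fun p hp => ?_⟩, fun y hy => (hy.2 P hP).unique hx⟩
  · rintro rfl
    exact not_lastTouch_diblock_self hP hv hx
  · obtain ⟨y, hy⟩ := exists_lastTouch ⟨r, hp.start_mem, mem_diblock_self⟩
    rwa [eq_of_lastTouch_diblock hv hp hP hy hx] at hy

end CutPaper
end

section
/- Let (T̂, {B_x}) be the cut decomposition of a digraph H rooted at s, and let y be a node of T̂ such that the path from s to y in T̂ contains at least ℓ nodes whose diblocks are non-degenerate (i.e., have at least 3 vertices). Then H contains an out-tree rooted at s with at least ℓ leaves. -/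
namespace CutPaper

variable {V : Type*}

/-! Induct along the chain `q` of the decomposition tree, from its far end back to `s`, keeping an
out-tree rooted at the current node `x` inside `B*_x`. To pass from a child `y` to its parent `a`,
hang a path `a ⇝ y` of `B*_a` above the old root: it meets the old tree only in `y`, since every
path from `a` enters `B*_y` through the bottleneck `y`. If `B_a` has at least three vertices then
`a` has two out-neighbours in `B_a` (the two paths to a bi-reachable vertex start differently), the
path can be chosen to avoid one of them, and the arc to that one is a new leaf. -/

theorem _root_.List.ncard_setOf_mem_cons_and_le {α : Type*} (P : α → Prop) (a : α) (q : List α) :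
    {z | z ∈ a :: q ∧ P z}.ncard ≤ {z | z ∈ q ∧ P z}.ncard + 1 := by
  refine (Set.ncard_le_ncard (t := insert a {z | z ∈ q ∧ P z}) ?_
    ((q.finite_toSet.subset fun _ hz => hz.1).insert a)).trans (Set.ncard_insert_le _ _)
  rintro z ⟨hz, hPz⟩
  rcases List.mem_cons.1 hz with rfl | hz
  exacts [Set.mem_insert z _, Set.mem_insert_of_mem a ⟨hz, hPz⟩]

theorem _root_.List.setOf_mem_cons_and_of_not {α : Type*} {P : α → Prop} {a : α} {q : List α}
    (ha : ¬ P a) : {z | z ∈ a :: q ∧ P z} = {z | z ∈ q ∧ P z} := by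
  ext z
  simp only [Set.mem_ofPred_eq, List.mem_cons, and_congr_left_iff, or_iff_right_iff_imp]
  rintro hPz rfl
  exact absurd hPz ha

theorem _root_.List.exists_eq_append_cons_forall_not {α : Type*} {P : α → Prop} :
    ∀ {l : List α}, (∃ z ∈ l, P z) → ∃ l₁ u l₂, l = l₁ ++ u :: l₂ ∧ P u ∧ ∀ z ∈ l₂, ¬ P z
  | [], ⟨_, hz, _⟩ => absurd hz List.not_mem_nil
  | a :: t, ⟨z, hz, hPz⟩ => by
    by_cases ht : ∃ z ∈ t, P z
    · obtain ⟨l₁, u, l₂, rfl, hu, hl₂⟩ := List.exists_eq_append_cons_forall_not ht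
      exact ⟨a :: l₁, u, l₂, rfl, hu, hl₂⟩
    · have hza : z = a := (List.mem_cons.1 hz).resolve_right fun hzt => ht ⟨z, hzt, hPz⟩
      exact ⟨[], a, t, rfl, hza ▸ hPz, fun z hzt hPz => ht ⟨z, hzt, hPz⟩⟩

section Paths

variable {A : V → V → Prop} {p : List V} {x m : V}

theorem isPath_singleton (A : V → V → Prop) (x : V) : IsPath A [x] x x :=
  ⟨List.isChain_singleton x, rfl, rfl, List.nodup_singleton x⟩

theorem IsPath.mono {B : V → V → Prop} (hAB : ∀ u v, A u v → B u v) (hp : IsPath A p x m) :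
    IsPath B p x m :=
  ⟨hp.1.imp hAB, hp.2⟩

theorem IsPath.head_mem (hp : IsPath A p x m) : x ∈ p :=
  List.mem_of_mem_head? hp.2.1

theorem IsPath.last_mem (hp : IsPath A p x m) : m ∈ p :=
  List.mem_of_getLast? hp.2.2.1

theorem IsPath.forall_mem {P : V → Prop} (hp : IsPath A p x m) (hx : P x)
    (hA : ∀ u v, A u v → P v) : ∀ w ∈ p, P w :=
  List.IsChain.induction P p hp.1 (fun u v huv _ => hA u v huv)
    fun hne => (List.head_eq_iff_head?_eq_some hne).2 hp.2.1 ▸ hx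

theorem IsPath.forall_mem_asub {S : Set V} (hp : IsPath (Asub A S) p x m) (hx : x ∈ S) :
    ∀ w ∈ p, w ∈ S :=
  hp.forall_mem hx fun _ _ huv => huv.2.2

theorem IsPath.cons {a : V} (hxa : A x a) (hx : x ∉ p) (hp : IsPath A p a m) :
    IsPath A (x :: p) x m := by
  obtain ⟨hc, hh, hl, hn⟩ := hp
  obtain ⟨t, rfl⟩ : ∃ t, p = a :: t := by
    cases p with
    | nil => exact absurd hh (by simp)
    | cons b t => exact ⟨t, by simpa using hh⟩
  exact ⟨List.isChain_cons_cons.2 ⟨hxa, hc⟩, rfl, by rwa [List.getLast?_cons_cons],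
    List.nodup_cons.2 ⟨hx, hn⟩⟩

theorem IsPath.concat {w : V} (hp : IsPath A p x m) (hmw : A m w) (hw : w ∉ p) :
    IsPath A (p ++ [w]) x w := by
  obtain ⟨hc, hh, hl, hn⟩ := hp
  refine ⟨List.isChain_append.2 ⟨hc, List.isChain_singleton w, ?_⟩, ?_, List.getLast?_concat, ?_⟩
  · rw [hl]
    rintro a ⟨⟩ b ⟨⟩
    exact hmw
  · rw [List.head?_append, hh]
    rfl
  · simpa [List.nodup_append] using ⟨hn, fun a ha haw => hw (haw ▸ ha)⟩

theorem IsPath.of_append_left {l₁ l₂ : List V} {w : V} (hp : IsPath A (l₁ ++ w :: l₂) x m) :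
    IsPath A (l₁ ++ [w]) x w := by
  obtain ⟨hc, hh, _, hn⟩ := hp
  refine ⟨hc.infix ⟨[], l₂, by simp⟩, ?_, List.getLast?_concat,
    hn.sublist (by simp)⟩
  cases l₁ <;> simp_all

theorem IsPath.of_append_right {l₁ l₂ : List V} {w : V} (hp : IsPath A (l₁ ++ w :: l₂) x m) :
    IsPath A (w :: l₂) w m := by
  obtain ⟨hc, _, hl, hn⟩ := hp
  exact ⟨hc.infix ⟨l₁, [], by simp⟩, rfl, by rwa [List.getLast?_append_cons] at hl,
    hn.sublist (List.sublist_append_right _ _)⟩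

theorem IsPath.eq_cons_cons (hp : IsPath A p x m) (hxm : x ≠ m) : ∃ b t, p = x :: b :: t := by
  obtain ⟨_, hh, hl, _⟩ := hp
  match p, hh, hl with
  | [a], hh, hl => exact absurd ((Option.some.inj hh).symm.trans (Option.some.inj hl)) hxm
  | a :: b :: t, hh, _ => exact ⟨b, t, by rw [Option.some.inj hh]⟩

theorem IsPath.eq_pair {t : List V} (hp : IsPath A (x :: m :: t) x m) : t = [] := by
  obtain ⟨_, _, hl, hn⟩ := hp
  cases t with
  | nil => rfl
  | cons c t =>
    rw [List.getLast?_cons_cons, List.getLast?_cons_cons] at hl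
    exact absurd (List.mem_of_getLast? hl) (List.nodup_cons.1 (List.nodup_cons.1 hn).2).1

/-- Restart the path at the last out-neighbour of `x` it visits. -/
theorem IsPath.exists_shortcut (hp : IsPath A p x m) (hxm : x ≠ m) :
    ∃ u t, IsPath A (x :: u :: t) x m ∧ ∀ z ∈ t, ¬ A x z := by
  obtain ⟨b, t, rfl⟩ := hp.eq_cons_cons hxm
  obtain ⟨l₁, u, l₂, hsplit, hu, hl₂⟩ :=
    List.exists_eq_append_cons_forall_not ⟨b, List.mem_cons_self, (List.isChain_cons_cons.1 hp.1).1⟩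
  have hpu : IsPath A (u :: l₂) u m := by
    rw [hsplit, ← List.cons_append] at hp
    exact hp.of_append_right
  have hx : x ∉ u :: l₂ := fun hx =>
    (List.nodup_cons.1 hp.2.2.2).1 (hsplit ▸ List.mem_append_right l₁ hx)
  exact ⟨u, l₂, hpu.cons hu hx, hl₂⟩

theorem IsPath.exists_avoiding_outNeighbor (hp : IsPath A p x m) (hxm : x ≠ m) {a b : V}
    (hab : a ≠ b) (hax : a ≠ x) (hbx : b ≠ x) (ha : A x a) (hb : A x b) :
    ∃ r w, IsPath A r x m ∧ (w = a ∨ w = b) ∧ w ∉ r := by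
  obtain ⟨u, t, hr, ht⟩ := hp.exists_shortcut hxm
  have hnot : ∀ w, w ≠ x → w ≠ u → A x w → w ∉ x :: u :: t := by
    intro w hwx hwu hw hmem
    rcases List.mem_cons.1 hmem with rfl | hmem
    · exact hwx rfl
    rcases List.mem_cons.1 hmem with rfl | hmem
    · exact hwu rfl
    · exact ht w hmem hw
  by_cases hau : a = u
  · exact ⟨_, b, hr, Or.inr rfl, hnot b hbx (hau ▸ hab.symm) hb⟩
  · exact ⟨_, a, hr, Or.inl rfl, hnot a hax hau ha⟩

theorem BiReachable.exists_two_outNeighbors {z : V} (hz : BiReachable A x z) (hzx : z ≠ x) :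
    ∃ a b, a ≠ b ∧ a ≠ x ∧ b ≠ x ∧ A x a ∧ A x b := by
  obtain ⟨p, q, hpq, hp, hq, hdisj⟩ := hz
  obtain ⟨a, tp, rfl⟩ := hp.eq_cons_cons hzx.symm
  obtain ⟨b, tq, rfl⟩ := hq.eq_cons_cons hzx.symm
  have hax : a ≠ x := fun h => (List.nodup_cons.1 hp.2.2.2).1 (h ▸ List.mem_cons_self)
  have hbx : b ≠ x := fun h => (List.nodup_cons.1 hq.2.2.2).1 (h ▸ List.mem_cons_self)
  refine ⟨a, b, ?_, hax, hbx, (List.isChain_cons_cons.1 hp.1).1, (List.isChain_cons_cons.1 hq.1).1⟩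
  rintro rfl
  -- a common second vertex must be `z` itself, and then both paths are `[x, z]`
  obtain rfl : a = z := (hdisj a (by simp) (by simp)).resolve_left hax
  rw [hp.eq_pair, hq.eq_pair] at hpq
  exact hpq rfl

end Paths

def addArc (T : V → V → Prop) (a b : V) : V → V → Prop := fun u v => T u v ∨ u = a ∧ v = b

theorem leaves_addArc_of_notMem {T : V → V → Prop} {S : Set V} {x m : V} (hx : x ∉ S) :
    leaves (addArc T x m) (insert x S) = leaves T S := by
  ext v
  constructor
  · rintro ⟨hv, hout⟩
    have hvx : v ≠ x := fun hvx => hout m (Or.inr ⟨hvx, rfl⟩)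
    exact ⟨hv.resolve_left hvx, fun u hu => hout u (Or.inl hu)⟩
  · rintro ⟨hvS, hout⟩
    refine ⟨Or.inr hvS, ?_⟩
    rintro u (hu | ⟨rfl, -⟩)
    exacts [hout u hu, hx hvS]

theorem leaves_addArc_insert {T : V → V → Prop} {S : Set V} {u w : V} (hw : ∀ v, ¬ T w v)
    (hu : u ∉ leaves T S) (huw : u ≠ w) :
    leaves (addArc T u w) (insert w S) = insert w (leaves T S) := by
  ext v
  constructor
  · rintro ⟨rfl | hvS, hout⟩
    · exact Set.mem_insert _ _
    · exact Set.mem_insert_of_mem _ ⟨hvS, fun z hz => hout z (Or.inl hz)⟩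
  · rintro (rfl | hv)
    · refine ⟨Set.mem_insert _ _, ?_⟩
      rintro z (hz | ⟨rfl, -⟩)
      exacts [hw z hz, huw rfl]
    · refine ⟨Set.mem_insert_of_mem _ hv.1, ?_⟩
      rintro z (hz | ⟨rfl, -⟩)
      exacts [hv.2 z hz, hu hv]

namespace IsOutTree

variable {A T : V → V → Prop} {S : Set V} {r : V}

theorem singleton (A : V → V → Prop) (r : V) : IsOutTree A (fun _ _ => False) {r} r where
  sub _ _ := False.elim
  mem _ _ := False.elim
  root_mem := rfl
  no_in_root _ := id
  unique_in _ hv hvr := absurd hv hvr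
  reach v hv := by
    obtain rfl := hv
    exact ⟨[v], isPath_singleton _ v⟩

theorem mem_of_isPath (hT : IsOutTree A T S r) {p : List V} {v : V} (hp : IsPath T p r v) :
    ∀ w ∈ p, w ∈ S :=
  hp.forall_mem hT.root_mem fun u v huv => (hT.mem u v huv).2

theorem addArc_root {m x : V} (hT : IsOutTree A T S m) (hxm : A x m) (hx : x ∉ S) :
    IsOutTree A (addArc T x m) (insert x S) x where
  sub := by
    rintro u v (huv | ⟨rfl, rfl⟩)
    exacts [hT.sub u v huv, hxm]
  mem := by
    rintro u v (huv | ⟨rfl, rfl⟩)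
    · exact ⟨Set.mem_insert_of_mem _ (hT.mem u v huv).1, Set.mem_insert_of_mem _ (hT.mem u v huv).2⟩
    · exact ⟨Set.mem_insert _ _, Set.mem_insert_of_mem _ hT.root_mem⟩
  root_mem := Set.mem_insert x S
  no_in_root := by
    rintro u (hu | ⟨-, rfl⟩)
    exacts [hx (hT.mem u x hu).2, hx hT.root_mem]
  unique_in := by
    intro v hv hvx
    by_cases hvm : v = m
    · subst hvm
      refine ⟨x, Or.inr ⟨rfl, rfl⟩, ?_⟩
      rintro u (hu | ⟨rfl, -⟩)
      exacts [absurd hu (hT.no_in_root u), rfl]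
    · obtain ⟨u, hu, huniq⟩ := hT.unique_in v (hv.resolve_left hvx) hvm
      refine ⟨u, Or.inl hu, ?_⟩
      rintro u' (hu' | ⟨-, rfl⟩)
      exacts [huniq u' hu', absurd rfl hvm]
  reach := by
    rintro v (rfl | hvS)
    · exact ⟨[v], isPath_singleton _ v⟩
    · obtain ⟨p, hp⟩ := hT.reach v hvS
      exact ⟨x :: p, (hp.mono fun _ _ => Or.inl).cons (Or.inr ⟨rfl, rfl⟩)
        fun hxp => hx (hT.mem_of_isPath hp x hxp)⟩

theorem addArc_leaf {u w : V} (hT : IsOutTree A T S r) (hu : u ∈ S) (huw : A u w) (hw : w ∉ S) :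
    IsOutTree A (addArc T u w) (insert w S) r where
  sub := by
    rintro a b (hab | ⟨rfl, rfl⟩)
    exacts [hT.sub a b hab, huw]
  mem := by
    rintro a b (hab | ⟨rfl, rfl⟩)
    · exact ⟨Set.mem_insert_of_mem _ (hT.mem a b hab).1, Set.mem_insert_of_mem _ (hT.mem a b hab).2⟩
    · exact ⟨Set.mem_insert_of_mem _ hu, Set.mem_insert _ _⟩
  root_mem := Set.mem_insert_of_mem w hT.root_mem
  no_in_root := by
    rintro a (ha | ⟨-, rfl⟩)
    exacts [hT.no_in_root a ha, hw hT.root_mem]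
  unique_in := by
    rintro v (rfl | hvS) hvr
    · refine ⟨u, Or.inr ⟨rfl, rfl⟩, ?_⟩
      rintro a (ha | ⟨rfl, -⟩)
      exacts [absurd (hT.mem a v ha).2 hw, rfl]
    · obtain ⟨a, ha, huniq⟩ := hT.unique_in v hvS hvr
      refine ⟨a, Or.inl ha, ?_⟩
      rintro b (hb | ⟨-, rfl⟩)
      exacts [huniq b hb, absurd hvS hw]
  reach := by
    rintro v (rfl | hvS)
    · obtain ⟨p, hp⟩ := hT.reach u hu
      exact ⟨p ++ [v], (hp.mono fun _ _ => Or.inl).concat (Or.inr ⟨rfl, rfl⟩)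
        fun hvp => hw (hT.mem_of_isPath hp v hvp)⟩
    · obtain ⟨p, hp⟩ := hT.reach v hvS
      exact ⟨p, hp.mono fun _ _ => Or.inl⟩

theorem exists_attach_path {m : V} (hT : IsOutTree A T S m) :
    ∀ {p : List V} {x : V}, IsPath A p x m → (∀ v ∈ p, v ≠ m → v ∉ S) →
      ∃ T', IsOutTree A T' (S ∪ {v | v ∈ p}) x ∧ leaves T' (S ∪ {v | v ∈ p}) = leaves T S
  | [], _, hp, _ => absurd hp.head_mem List.not_mem_nil
  | [a], x, hp, _ => by
    obtain rfl : a = x := Option.some.inj hp.2.1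
    obtain rfl : a = m := Option.some.inj hp.2.2.1
    have hS : S ∪ {v | v ∈ [a]} = S := by simpa using hT.root_mem
    rw [hS]
    exact ⟨T, hT, rfl⟩
  | a :: b :: t, x, hp, hpS => by
    obtain rfl : a = x := Option.some.inj hp.2.1
    have htail : IsPath A (b :: t) b m := IsPath.of_append_right (l₁ := [a]) hp
    obtain ⟨T', hT', hleaves⟩ :=
      exists_attach_path hT htail fun v hv => hpS v (List.mem_cons_of_mem a hv)
    have hat : a ∉ b :: t := (List.nodup_cons.1 hp.2.2.2).1
    have haS : a ∉ S ∪ {v | v ∈ b :: t} := by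
      rintro (haS | hat')
      exacts [hpS a List.mem_cons_self (fun ham => hat (ham ▸ htail.last_mem)) haS, hat hat']
    have hset : insert a (S ∪ {v | v ∈ b :: t}) = S ∪ {v | v ∈ a :: b :: t} := by
      ext v
      simp only [Set.mem_insert_iff, Set.mem_union, Set.mem_ofPred_eq, List.mem_cons]
      tauto
    refine ⟨addArc T' a b, hset ▸ hT'.addArc_root (List.isChain_cons_cons.1 hp.1).1 haS, ?_⟩
    rw [← hset, leaves_addArc_of_notMem haS, hleaves]

end IsOutTree

theorem LastTouch.unique_s14 {B : Set V} {p : List V} {u v : V} (hu : LastTouch B p u)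
    (hv : LastTouch B p v) : u = v := by
  classical
  have key : ∀ z, LastTouch B p z → (p.filter (· ∈ B)).getLast? = some z := by
    rintro z ⟨p₁, p₂, rfl, hzB, hp₂⟩
    have hz : (z :: p₂).filter (· ∈ B) = [z] := by
      rw [List.filter_cons_of_pos (by simpa using hzB),
        List.filter_eq_nil_iff.2 fun a ha => by simpa using hp₂ a ha]
    rw [List.filter_append, hz, List.getLast?_concat]
  exact Option.some.inj ((key u hu).symm.trans (key v hv))

section Decomp

variable {A : V → V → Prop} {s : V} {d : PreDecomp V}

theorem mem_Bstar_of_mem_B {x v : V} (hx : x ∈ d.N) (hv : v ∈ d.B x) : v ∈ Bstar d s x :=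
  ⟨x, hx, Relation.ReflTransGen.refl, hv⟩

theorem Bstar_subset_of_isChild {x y : V} (hc : IsChild d s y x) : Bstar d s y ⊆ Bstar d s x := by
  rintro v ⟨z, hz, hanc, hvB⟩
  exact ⟨z, hz, hanc.tail hc, hvB⟩

namespace IsCutDecomp

theorem mem_B_self (h : IsCutDecomp A s d) {x : V} (hx : x ∈ d.N) : x ∈ d.B x := by
  rw [h.diblock_eq x hx]
  exact Or.inl (Or.inr rfl)

theorem mem_B_of_asub (h : IsCutDecomp A s d) {x a : V} (hx : x ∈ d.N)
    (ha : Asub A (Bstar d s x) x a) : a ∈ d.B x := by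
  rw [h.diblock_eq x hx]
  exact Or.inr ha

theorem notMem_Bstar_of_isChild (h : IsCutDecomp A s d) {x y z : V} (hx : x ∈ d.N)
    (hc : IsChild d s y x) (hz : z ∈ d.B x) (hzy : z ≠ y) : z ∉ Bstar d s y := by
  rw [h.child_part x hx y hc]
  rintro (rfl | hP)
  exacts [hzy rfl, hP.2.1 hz]

theorem exists_isChild_mem_partClass (h : IsCutDecomp A s d) {x w : V} (hx : x ∈ d.N)
    (hw : w ∈ Bstar d s x) (hwB : w ∉ d.B x) : ∃ c, IsChild d s c x ∧ w ∈ PartClass A d s x c := by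
  obtain ⟨z, hz, hanc, hwz⟩ := hw
  rcases Relation.ReflTransGen.cases_tail hanc with rfl | ⟨c, hzc, hcx⟩
  · exact absurd hwz hwB
  · have hwc : w ∈ Bstar d s c := ⟨z, hz, hzc, hwz⟩
    rw [h.child_part x hx c hcx] at hwc
    rcases hwc with rfl | hwP
    · exact absurd ((h.child_iff x hx w).1 hcx).1 hwB
    · exact ⟨c, hcx, hwP⟩

theorem notMem_Bstar_of_isPath (h : IsCutDecomp A s d) {x y : V} (hx : x ∈ d.N)
    (hc : IsChild d s y x) {p : List V} (hp : IsPath (Asub A (Bstar d s x)) p x y) :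
    ∀ w ∈ p, w ≠ y → w ∉ Bstar d s y := by
  intro w hw hwy hwB
  rw [h.child_part x hx y hc] at hwB
  obtain ⟨l₁, l₂, rfl⟩ := List.append_of_mem hw
  obtain ⟨q₁, q₂, hq, -, -⟩ := (hwB.resolve_left hwy).2.2 _ hp.of_append_left
  have hy : y ∈ l₁ := by
    have hy : y ∈ l₁ ++ [w] := hq ▸ List.mem_append_right q₁ List.mem_cons_self
    simpa [Ne.symm hwy] using hy
  exact List.disjoint_of_nodup_append hp.2.2.2 hy hp.of_append_right.last_mem

theorem mem_Bstar_of_lastTouch (h : IsCutDecomp A s d) {x y v : V} (hx : x ∈ d.N)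
    (hc : IsChild d s y x) {p₁ p₂ : List V} (hp : IsPath (Asub A (Bstar d s x)) (p₁ ++ y :: p₂) x v)
    (hp₂ : ∀ z ∈ p₂, z ∉ d.B x) : ∀ w ∈ p₂, w ∈ Bstar d s y := by
  intro w hw
  have hwBs : w ∈ Bstar d s x := hp.forall_mem_asub (mem_Bstar_of_mem_B hx (h.mem_B_self hx)) w
    (List.mem_append_right p₁ (List.mem_cons_of_mem y hw))
  obtain ⟨c, hcx, hwc⟩ := h.exists_isChild_mem_partClass hx hwBs (hp₂ w hw)
  obtain ⟨l₃, l₄, rfl⟩ := List.append_of_mem hw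
  have hpre : IsPath (Asub A (Bstar d s x)) ((p₁ ++ y :: l₃) ++ [w]) x w :=
    IsPath.of_append_left (l₂ := l₄) (by simpa using hp)
  have hlast : LastTouch (d.B x) ((p₁ ++ y :: l₃) ++ [w]) y :=
    ⟨p₁, l₃ ++ [w], by simp, ((h.child_iff x hx y).1 hc).1,
      fun z hz => hp₂ z (by simp at hz ⊢; tauto)⟩
  obtain rfl : c = y := (hwc.2.2 _ hpre).unique_s14 hlast
  rw [h.child_part x hx c hc]
  exact Or.inr hwc

theorem reaches_of_isChild (h : IsCutDecomp A s d) {x y : V} (hx : x ∈ d.N) (hc : IsChild d s y x)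
    (hr : ∀ v ∈ Bstar d s x, Reaches (Asub A (Bstar d s x)) x v) :
    ∀ v ∈ Bstar d s y, Reaches (Asub A (Bstar d s y)) y v := by
  intro v hv
  rw [h.child_part x hx y hc] at hv
  rcases hv with rfl | ⟨hvBs, -, hall⟩
  · exact ⟨[v], isPath_singleton _ v⟩
  obtain ⟨p, hp⟩ := hr v hvBs
  obtain ⟨p₁, p₂, rfl, -, hp₂⟩ := hall p hp
  have hmem : ∀ w ∈ y :: p₂, w ∈ Bstar d s y := by
    rintro w (_ | ⟨_, hw⟩)
    · exact mem_Bstar_of_mem_B hc.1 (h.mem_B_self hc.1)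
    · exact h.mem_Bstar_of_lastTouch hx hc hp hp₂ w hw
  have hq := hp.of_append_right
  exact ⟨y :: p₂, hq.1.imp_of_mem_imp fun a b ha hb hab => ⟨hab.1, hmem a ha, hmem b hb⟩, hq.2⟩

theorem exists_two_outNeighbors (h : IsCutDecomp A s d) {x : V} (hx : x ∈ d.N)
    (h3 : 3 ≤ (d.B x).ncard) :
    ∃ a b, a ≠ b ∧ a ≠ x ∧ b ≠ x ∧ Asub A (Bstar d s x) x a ∧ Asub A (Bstar d s x) x b := by
  have hfin : (d.B x).Finite := Set.finite_of_ncard_pos (by omega)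
  have h2 : 1 < (d.B x \ {x}).ncard := by
    have := Set.ncard_sdiff_singleton_add_one (h.mem_B_self hx) hfin
    omega
  obtain ⟨u, v, ⟨huB, hux⟩, ⟨hvB, hvx⟩, huv⟩ := (Set.one_lt_ncard_iff hfin.sdiff).1 h2
  have key : ∀ z ∈ d.B x, z ∉ ({x} : Set V) → Asub A (Bstar d s x) x z ∨
      ∃ a b, a ≠ b ∧ a ≠ x ∧ b ≠ x ∧ Asub A (Bstar d s x) x a ∧ Asub A (Bstar d s x) x b := by
    intro z hzB hzx
    rw [h.diblock_eq x hx] at hzB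
    rcases hzB with (hbi | rfl) | hout
    · exact Or.inr (hbi.exists_two_outNeighbors hzx)
    · exact absurd rfl hzx
    · exact Or.inl hout
  rcases key u huB hux with hu | hpair
  · rcases key v hvB hvx with hv | hpair
    · exact ⟨u, v, huv, hux, hvx, hu, hv⟩
    · exact hpair
  · exact hpair

theorem exists_outTree_of_isPath_isChild (h : IsCutDecomp A s d) {a y : V} (ha : a ∈ d.N)
    (hc : IsChild d s y a) {T : V → V → Prop} {S : Set V} (hT : IsOutTree A T S y)
    (hS : S ⊆ Bstar d s y) {r : List V} (hr : IsPath (Asub A (Bstar d s a)) r a y) :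
    ∃ T', IsOutTree A T' (S ∪ {v | v ∈ r}) a ∧ S ∪ {v | v ∈ r} ⊆ Bstar d s a ∧
      leaves T' (S ∪ {v | v ∈ r}) = leaves T S := by
  obtain ⟨T', hT', hleaves⟩ := hT.exists_attach_path (hr.mono fun _ _ huv => huv.1)
    fun v hv hvy hvS => h.notMem_Bstar_of_isPath ha hc hr v hv hvy (hS hvS)
  exact ⟨T', hT', Set.union_subset (hS.trans (Bstar_subset_of_isChild hc))
    (hr.forall_mem_asub (mem_Bstar_of_mem_B ha (h.mem_B_self ha))), hleaves⟩

theorem exists_outTree_parent_of_three_le [Finite V] (h : IsCutDecomp A s d) {a y : V}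
    (ha : a ∈ d.N) (hc : IsChild d s y a)
    (hreach : ∀ v ∈ Bstar d s a, Reaches (Asub A (Bstar d s a)) a v)
    {T : V → V → Prop} {S : Set V} (hT : IsOutTree A T S y) (hS : S ⊆ Bstar d s y)
    (h3 : 3 ≤ (d.B a).ncard) :
    ∃ T' S', IsOutTree A T' S' a ∧ S' ⊆ Bstar d s a ∧
      (leaves T S).ncard < (leaves T' S').ncard := by
  obtain ⟨hyB, hya, -⟩ := (h.child_iff a ha y).1 hc
  obtain ⟨p, hp⟩ := hreach y (mem_Bstar_of_mem_B ha hyB)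
  obtain ⟨a₁, a₂, h12, h1, h2, hA1, hA2⟩ := h.exists_two_outNeighbors ha h3
  obtain ⟨r, w, hr, hw, hwr⟩ := hp.exists_avoiding_outNeighbor hya.symm h12 h1 h2 hA1 hA2
  have haw : Asub A (Bstar d s a) a w := by rcases hw with rfl | rfl <;> assumption
  obtain ⟨T', hT', hsub, hleaves⟩ := h.exists_outTree_of_isPath_isChild ha hc hT hS hr
  have hwS' : w ∉ S ∪ {v | v ∈ r} := by
    rintro (hwS | hwr')
    · exact h.notMem_Bstar_of_isChild ha hc (h.mem_B_of_asub ha haw)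
        (fun hwy => hwr (hwy ▸ hr.last_mem)) (hS hwS)
    · exact hwr hwr'
  have haL : a ∉ leaves T' (S ∪ {v | v ∈ r}) := by
    rw [hleaves]
    exact fun haL => h.notMem_Bstar_of_isChild ha hc (h.mem_B_self ha) hya.symm (hS haL.1)
  have hwa : a ≠ w := fun haw' => hwr (haw' ▸ hr.head_mem)
  refine ⟨addArc T' a w, _, hT'.addArc_leaf (Or.inr hr.head_mem) haw.1 hwS',
    Set.insert_subset haw.2.2 hsub, ?_⟩
  rw [leaves_addArc_insert (fun v hv => hwS' (hT'.mem w v hv).1) haL hwa, hleaves,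
    Set.ncard_insert_of_notMem (fun hwL => hwS' (Or.inl hwL.1))]
  exact Nat.lt_succ_self _

theorem exists_outTree_of_isChain [Finite V] (h : IsCutDecomp A s d) :
    ∀ (q : List V) {x : V}, x ∈ d.N → (x :: q).IsChain (fun a b => IsChild d s b a) →
      (∀ v ∈ Bstar d s x, Reaches (Asub A (Bstar d s x)) x v) →
      ∃ T S, IsOutTree A T S x ∧ S ⊆ Bstar d s x ∧
        {z | z ∈ x :: q ∧ 3 ≤ (d.B z).ncard}.ncard ≤ (leaves T S).ncard
  | [], x, hx, _, _ => by
    refine ⟨_, _, IsOutTree.singleton A x,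
      Set.singleton_subset_iff.2 (mem_Bstar_of_mem_B hx (h.mem_B_self hx)),
      Set.ncard_le_ncard ?_ (Set.toFinite _)⟩
    rintro z ⟨hz, -⟩
    obtain rfl := List.mem_singleton.1 hz
    exact ⟨rfl, fun _ => id⟩
  | y :: q, x, hx, hq, hreach => by
    have hc : IsChild d s y x := (List.isChain_cons_cons.1 hq).1
    obtain ⟨T, S, hT, hS, hcount⟩ := exists_outTree_of_isChain h q hc.1
      (List.isChain_cons_cons.1 hq).2 (h.reaches_of_isChild hx hc hreach)
    by_cases h3 : 3 ≤ (d.B x).ncard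
    · obtain ⟨T', S', hT', hS', hlt⟩ := h.exists_outTree_parent_of_three_le hx hc hreach hT hS h3
      exact ⟨T', S', hT', hS', (List.ncard_setOf_mem_cons_and_le _ x _).trans (by omega)⟩
    · obtain ⟨r, hr⟩ := hreach y (mem_Bstar_of_mem_B hx ((h.child_iff x hx y).1 hc).1)
      obtain ⟨T', hT', hS', hleaves⟩ := h.exists_outTree_of_isPath_isChild hx hc hT hS hr
      refine ⟨T', _, hT', hS', ?_⟩
      rwa [hleaves, List.setOf_mem_cons_and_of_not (P := fun z => 3 ≤ (d.B z).ncard) h3]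

end IsCutDecomp

end Decomp

theorem cutDecomp_nondegenerate_leaves_general {V : Type*} [Fintype V]
    (A : V → V → Prop) (s : V) (hreach : ∀ v, Reaches A s v)
    (d : PreDecomp V) (h : IsCutDecomp A s d)
    (ℓ : ℕ)
    (q : List V) (hq : List.Chain' (fun a b => IsChild d s b a) q)
    (hqh : q.head? = some s)
    (hcount : ℓ ≤ {x | x ∈ q ∧ 3 ≤ (d.B x).ncard}.ncard) :
    ∃ (T : V → V → Prop) (S : Set V),
      IsOutTree A T S s ∧ ℓ ≤ (leaves T S).ncard := by
  obtain ⟨q, rfl⟩ := List.head?_eq_some_iff.1 hqh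
  have hreach' : ∀ v ∈ Bstar d s s, Reaches (Asub A (Bstar d s s)) s v := fun v _ => by
    obtain ⟨p, hp⟩ := hreach v
    exact ⟨p, hp.mono fun _ _ huv => ⟨huv, h.cover ▸ trivial, h.cover ▸ trivial⟩⟩
  obtain ⟨T, S, hT, -, hleaves⟩ := h.exists_outTree_of_isChain q h.root_mem hq hreach'
  exact ⟨T, S, hT, hcount.trans hleaves⟩

/-- if some root-to-node path of the decomposition tree contains
at least `ℓ` nodes with non-degenerate diblocks (diblocks with at least three
vertices), then there is an out-tree rooted at `s` with at least `ℓ` leaves. -/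
theorem cutDecomp_nondegenerate_leaves {V : Type*} [Fintype V]
    (A : V → V → Prop) (s : V) (hreach : ∀ v, Reaches A s v)
    (d : PreDecomp V) (h : IsCutDecomp A s d)
    (y : V) (hy : y ∈ d.N) (ℓ : ℕ)
    (q : List V) (hq : List.Chain' (fun a b => IsChild d s b a) q)
    (hqh : q.head? = some s) (hql : q.getLast? = some y)
    (hcount : ℓ ≤ {x | x ∈ q ∧ 3 ≤ (d.B x).ncard}.ncard) :
    ∃ (T : V → V → Prop) (S : Set V),
      IsOutTree A T S s ∧ ℓ ≤ (leaves T S).ncard :=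
  cutDecomp_nondegenerate_leaves_general A s hreach d h ℓ q hq hqh hcount

end CutPaper
end
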